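/- Gibbs variational characterization used in the proofs: for β > 0 and symmetric C ∈ ℝ^{n×n}, the unique minimizer of X ↦ Tr(CX) + β^{-1}(Tr(X log X) − Tr X) over symmetric positive definite matrices X with prescribed diagonal diag(X) = d (d entrywise positive, assuming a feasible PD point exists) has the form X = exp(−β(C − diag(λ))) for some λ ∈ ℝⁿ. -/

import Mathlib

/-!
The scalar inequality `b log b ≤ b log a + b²/a − b` (i.e. `log x ≤ x − 1`), summed against the
weights `⟨v_i, u_j⟩²` of two orthonormal eigenbases, gives the Klein-type bound
`Tr(B log B) ≤ Tr(B log A) + Tr(B² A⁻¹) − Tr B` for positive definite `A`, `B`. Applied with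
`A = X`, `B = X + tE` it bounds the free energy along the line `X + tE` by a quadratic in `t`
with linear coefficient `Tr(CE) + β⁻¹ Tr(E log X)`, so the matrix logarithm is never
differentiated. For `E = e_p e_qᵀ + e_q e_pᵀ` with `p ≠ q` the line keeps the diagonal and stays
positive definite near `t = 0`, so minimality forces `C_pq + β⁻¹ (log X)_pq = 0`. Hence
`log X = −β (C − diag λ)` with `λ_i = C_ii + β⁻¹ (log X)_ii`, and `X = exp (log X)`.
-/

open Filter Topology

lemma Real.mul_log_le_mul_log_add_sq_div_sub {a b : ℝ} (ha : 0 < a) (hb : 0 < b) :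
    b * Real.log b ≤ b * Real.log a + b ^ 2 / a - b := by
  have h := mul_le_mul_of_nonneg_left (Real.log_le_sub_one_of_pos (div_pos hb ha)) hb.le
  rw [Real.log_div hb.ne' ha.ne'] at h
  linear_combination h

lemma eq_zero_of_eventually_nonneg_mul_add_mul_sq {c K : ℝ}
    (h : ∀ᶠ t in 𝓝 (0 : ℝ), 0 ≤ t * c + K * t ^ 2) : c = 0 := by
  have hmin : IsLocalMin (fun t : ℝ => t * c + K * t ^ 2) 0 := by
    filter_upwards [h] with t ht
    simpa using ht
  have hderiv : HasDerivAt (fun t : ℝ => t * c + K * t ^ 2) c 0 :=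
    (((hasDerivAt_id' 0).mul_const c).add ((hasDerivAt_pow 2 0).const_mul K)).congr_deriv
      (by simp)
  exact hmin.hasDerivAt_eq_zero hderiv

namespace Matrix

section

variable {ι : Type*} [DecidableEq ι]

lemma single_add_single_isHermitian (p q : ι) :
    (single p q (1 : ℝ) + single q p 1).IsHermitian := by
  rw [IsHermitian, conjTranspose_add, conjTranspose_single, conjTranspose_single, star_one,
    add_comm]

lemma single_add_single_apply_self {p q : ι} (hpq : p ≠ q) (k : ι) :
    (single p q (1 : ℝ) + single q p 1 : Matrix ι ι ℝ) k k = 0 := by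
  simp only [add_apply, single_apply]
  grind

lemma neg_smul_sub_diagonal_eq {β : ℝ} (hβ : β ≠ 0) {C L : Matrix ι ι ℝ}
    (h : ∀ p q, p ≠ q → C p q + β⁻¹ * L p q = 0) :
    (-β) • (C - diagonal fun i => C i i + β⁻¹ * L i i) = L := by
  ext p q
  by_cases hpq : p = q
  · subst hpq
    simp [hβ]
  · have hCL := h p q hpq
    field_simp at hCL
    simp only [smul_apply, sub_apply, diagonal_apply_ne _ hpq, sub_zero, smul_eq_mul]
    linarith

end

variable {ι : Type*} [Fintype ι] [DecidableEq ι]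

lemma trace_mul_single_add_single {M : Matrix ι ι ℝ} (hM : M.IsHermitian) (p q : ι) :
    (M * (single p q 1 + single q p 1)).trace = 2 * M p q := by
  rw [mul_add, trace_add, trace_mul_single, trace_mul_single, ← hM.apply p q]
  simp only [MulOpposite.op_one, one_smul, star_trivial]
  ring

lemma trace_diagonal_mul_mul_diagonal_mul_star {R : Type*} [CommSemiring R] [StarRing R]
    [TrivialStar R] (W : Matrix ι ι R) (f g : ι → R) :
    (diagonal f * W * diagonal g * star W).trace = ∑ i, ∑ j, f i * g j * W i j ^ 2 := by
  have hentry : ∀ i j, (diagonal f * W * diagonal g) i j = f i * W i j * g j := fun i j => by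
    rw [mul_diagonal, diagonal_mul]
  simp only [trace, diag_apply, mul_apply, hentry, star_apply, star_trivial]
  refine Finset.sum_congr rfl fun i _ => Finset.sum_congr rfl fun j _ => ?_
  ring

lemma trace_conj_diagonal_mul_conj_diagonal {R : Type*} [CommSemiring R] [StarRing R]
    [TrivialStar R] (U V : Matrix ι ι R) (f g : ι → R) :
    (V * diagonal f * star V * (U * diagonal g * star U)).trace
      = ∑ i, ∑ j, f i * g j * (star V * U) i j ^ 2 := by
  rw [← trace_diagonal_mul_mul_diagonal_mul_star, star_mul, star_star]
  simp only [mul_assoc]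
  rw [trace_mul_comm V]
  simp only [mul_assoc]

namespace IsHermitian

variable {A B : Matrix ι ι ℝ}

lemma cfc_eq_mul_diagonal_mul_star (hA : A.IsHermitian) (f : ℝ → ℝ) :
    hA.cfc f = (hA.eigenvectorUnitary : Matrix ι ι ℝ) * diagonal (f ∘ hA.eigenvalues)
      * star (hA.eigenvectorUnitary : Matrix ι ι ℝ) := by
  rw [IsHermitian.cfc, RCLike.ofReal_real_eq_id, Function.id_comp, Unitary.conjStarAlgAut_apply]

lemma cfc_mul_cfc (hA : A.IsHermitian) (f g : ℝ → ℝ) :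
    hA.cfc f * hA.cfc g = hA.cfc (fun x => f x * g x) := by
  simp only [IsHermitian.cfc, ← map_mul, diagonal_mul_diagonal]
  rfl

lemma cfc_congr (hA : A.IsHermitian) {f g : ℝ → ℝ}
    (h : ∀ i, f (hA.eigenvalues i) = g (hA.eigenvalues i)) : hA.cfc f = hA.cfc g := by
  simp only [IsHermitian.cfc]
  congr 3
  funext i
  simp [h i]

protected lemma cfc_id (hA : A.IsHermitian) : hA.cfc id = A := by
  rw [← hA.cfc_eq, cfc_id ℝ A hA.isSelfAdjoint]

protected lemma cfc_const_one (hA : A.IsHermitian) : hA.cfc (fun _ => 1) = 1 := by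
  rw [← hA.cfc_eq, cfc_const_one ℝ A]

lemma cfc_const_add_mul (hA : A.IsHermitian) (c s : ℝ) :
    hA.cfc (fun x => c + s * x) = c • 1 + s • A := by
  rw [← hA.cfc_eq, cfc_add .., cfc_const .., cfc_const_mul .., _root_.cfc_id' ℝ A,
    Algebra.algebraMap_eq_smul_one]

lemma mul_cfc (hA : A.IsHermitian) (f : ℝ → ℝ) : A * hA.cfc f = hA.cfc (fun x => x * f x) := by
  nth_rw 1 [← hA.cfc_id]
  exact hA.cfc_mul_cfc id f

lemma isHermitian_cfc (hA : A.IsHermitian) (f : ℝ → ℝ) : (hA.cfc f).IsHermitian :=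
  hA.cfc_eq f ▸ cfc_predicate f A

lemma posDef_cfc (hA : A.IsHermitian) {f : ℝ → ℝ} (hf : ∀ i, 0 < f (hA.eigenvalues i)) :
    (hA.cfc f).PosDef := by
  rw [cfc_eq_mul_diagonal_mul_star, IsUnit.posDef_star_right_conjugate_iff Unitary.isUnit_coe]
  exact .diagonal hf

lemma posSemidef_cfc (hA : A.IsHermitian) {f : ℝ → ℝ} (hf : ∀ i, 0 ≤ f (hA.eigenvalues i)) :
    (hA.cfc f).PosSemidef := by
  rw [cfc_eq_mul_diagonal_mul_star, IsUnit.posSemidef_star_right_conjugate_iff Unitary.isUnit_coe]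
  exact .diagonal hf

lemma trace_cfc_mul_cfc (hA : A.IsHermitian) (hB : B.IsHermitian) (f g : ℝ → ℝ) :
    (hB.cfc f * hA.cfc g).trace = ∑ i, ∑ j, f (hB.eigenvalues i) * g (hA.eigenvalues j)
      * (star (hB.eigenvectorUnitary : Matrix ι ι ℝ) * hA.eigenvectorUnitary) i j ^ 2 := by
  rw [cfc_eq_mul_diagonal_mul_star, cfc_eq_mul_diagonal_mul_star,
    trace_conj_diagonal_mul_conj_diagonal]
  rfl

end IsHermitian

namespace PosDef

variable {A B X E : Matrix ι ι ℝ}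

lemma mul_cfc_inv (hA : A.PosDef) : A * hA.1.cfc (·⁻¹) = 1 := by
  rw [hA.1.mul_cfc, ← hA.1.cfc_const_one]
  exact hA.1.cfc_congr fun i => mul_inv_cancel₀ (hA.eigenvalues_pos i).ne'

lemma trace_mul_cfc_log_le (hA : A.PosDef) (hB : B.PosDef) :
    (B * hB.1.cfc Real.log).trace
      ≤ (B * hA.1.cfc Real.log).trace + (B * B * hA.1.cfc (·⁻¹)).trace - B.trace := by
  -- write each trace as `Tr(f(B) g(A))`, a double sum against the same weights
  have h₁ : (B * hB.1.cfc Real.log).trace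
      = (hB.1.cfc (fun x => x * Real.log x) * hA.1.cfc (fun _ => 1)).trace := by
    rw [hA.1.cfc_const_one, mul_one, hB.1.mul_cfc]
  have h₂ : (B * hA.1.cfc Real.log).trace = (hB.1.cfc id * hA.1.cfc Real.log).trace := by
    rw [hB.1.cfc_id]
  have h₃ : B * B = hB.1.cfc (fun x => x * x) := by
    calc B * B = B * hB.1.cfc id := by rw [hB.1.cfc_id]
      _ = _ := hB.1.mul_cfc id
  have h₄ : B.trace = (hB.1.cfc id * hA.1.cfc (fun _ => 1)).trace := by
    rw [hA.1.cfc_const_one, mul_one, hB.1.cfc_id]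
  rw [h₁, h₂, h₃, h₄]
  simp only [IsHermitian.trace_cfc_mul_cfc, ← Finset.sum_add_distrib, ← Finset.sum_sub_distrib]
  gcongr with i _ j _
  have hw := sq_nonneg
    ((star (hB.1.eigenvectorUnitary : Matrix ι ι ℝ) * hA.1.eigenvectorUnitary) i j)
  have key := mul_le_mul_of_nonneg_right
    (Real.mul_log_le_mul_log_add_sq_div_sub (hA.eigenvalues_pos j) (hB.eigenvalues_pos i)) hw
  simp only [id, mul_one]
  linear_combination key

lemma trace_mul_cfc_log_add_smul_le (hX : X.PosDef) {t : ℝ} (hXt : (X + t • E).PosDef) :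
    ((X + t • E) * hXt.1.cfc Real.log).trace - (X + t • E).trace
      ≤ (X * hX.1.cfc Real.log).trace - X.trace + t * (E * hX.1.cfc Real.log).trace
        + t ^ 2 * (E * E * hX.1.cfc (·⁻¹)).trace := by
  set J := hX.1.cfc (·⁻¹)
  have hXJ : X * J = 1 := hX.mul_cfc_inv
  have hJX : J * X = 1 := mul_eq_one_comm.mp hXJ
  have hsq : (X + t • E) * (X + t • E) * J
      = X + t • (X * E * J) + t • E + t ^ 2 • (E * E * J) := by
    simp only [add_mul, mul_add, Matrix.smul_mul, Matrix.mul_smul, mul_assoc, hXJ, mul_one]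
    module
  have hXEJ : (X * E * J).trace = E.trace := by rw [trace_mul_cycle, hJX, one_mul]
  have hKlein := hX.trace_mul_cfc_log_le hXt
  rw [hsq] at hKlein
  simp only [add_mul, Matrix.smul_mul, trace_add, trace_smul, hXEJ, smul_eq_mul] at hKlein ⊢
  linarith

lemma eventually_add_smul_posDef (hX : X.PosDef) (hE : E.IsHermitian) :
    ∀ᶠ t in 𝓝 (0 : ℝ), (X + t • E).PosDef := by
  obtain ⟨μ, hμX, hμ⟩ : ∃ μ, (∀ i, μ ≤ hX.1.eigenvalues i) ∧ 0 < μ :=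
    (((eventually_all.2 fun i => (eventually_le_nhds (hX.eigenvalues_pos i)).filter_mono
      nhdsWithin_le_nhds).and self_mem_nhdsWithin : ∀ᶠ μ in 𝓝[>] (0 : ℝ), _)).exists
  have hpos : ∀ᶠ t in 𝓝 (0 : ℝ), ∀ i, 0 < μ + t * hE.eigenvalues i := eventually_all.2 fun i =>
    ((continuous_const.add (continuous_id.mul continuous_const)).tendsto' 0 μ
      (by simp)).eventually_const_lt hμ
  filter_upwards [hpos] with t ht
  have hsplit : X + t • E = hX.1.cfc (fun x => -μ + 1 * x) + hE.cfc (fun x => μ + t * x) := by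
    rw [IsHermitian.cfc_const_add_mul, IsHermitian.cfc_const_add_mul]
    module
  rw [hsplit]
  exact PosDef.posSemidef_add (hX.1.posSemidef_cfc fun i => by linarith [hμX i])
    (hE.posDef_cfc ht)

open scoped MatrixOrder Matrix.Norms.L2Operator in
lemma exp_cfc_log (hX : X.PosDef) : NormedSpace.exp (hX.1.cfc Real.log) = X := by
  rw [← hX.1.cfc_eq]
  exact CFC.exp_log X hX.isStrictlyPositive

end PosDef

noncomputable def freeEnergy (β : ℝ) (C X : Matrix ι ι ℝ) (hX : X.IsHermitian) : ℝ :=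
  (C * X).trace + β⁻¹ * ((X * hX.cfc Real.log).trace - X.trace)

namespace PosDef

variable {β t : ℝ} {C X E : Matrix ι ι ℝ}

lemma freeEnergy_add_smul_le (hβ : 0 < β) (hX : X.PosDef) (hXt : (X + t • E).PosDef) :
    freeEnergy β C (X + t • E) hXt.1 ≤ freeEnergy β C X hX.1
      + t * ((C * E).trace + β⁻¹ * (E * hX.1.cfc Real.log).trace)
      + t ^ 2 * (β⁻¹ * (E * E * hX.1.cfc (·⁻¹)).trace) := by
  have h := mul_le_mul_of_nonneg_left (hX.trace_mul_cfc_log_add_smul_le hXt)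
    (inv_nonneg.2 hβ.le)
  have hlin : (C * (X + t • E)).trace = (C * X).trace + t * (C * E).trace := by
    rw [mul_add, trace_add, Matrix.mul_smul, trace_smul, smul_eq_mul]
  simp only [freeEnergy, hlin]
  linear_combination h

lemma trace_mul_add_inv_mul_trace_mul_cfc_log_eq_zero (hβ : 0 < β) (hX : X.PosDef)
    (hE : E.IsHermitian) (hmin : ∀ (t : ℝ) (hXt : (X + t • E).PosDef),
      freeEnergy β C X hX.1 ≤ freeEnergy β C (X + t • E) hXt.1) :
    (C * E).trace + β⁻¹ * (E * hX.1.cfc Real.log).trace = 0 := by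
  refine eq_zero_of_eventually_nonneg_mul_add_mul_sq
    (K := β⁻¹ * (E * E * hX.1.cfc (·⁻¹)).trace) ?_
  filter_upwards [hX.eventually_add_smul_posDef hE] with t hXt
  linarith [hmin t hXt, freeEnergy_add_smul_le (C := C) hβ hX hXt]

lemma add_inv_mul_cfc_log_apply_eq_zero (hβ : 0 < β) (hC : C.IsHermitian) (hX : X.PosDef)
    (hmin : ∀ Y (hY : Y.PosDef), (∀ i, Y i i = X i i) →
      freeEnergy β C X hX.1 ≤ freeEnergy β C Y hY.1)
    {p q : ι} (hpq : p ≠ q) : C p q + β⁻¹ * hX.1.cfc Real.log p q = 0 := by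
  have h := trace_mul_add_inv_mul_trace_mul_cfc_log_eq_zero hβ hX
    (single_add_single_isHermitian p q) fun t hXt => hmin _ hXt fun k => by
      rw [add_apply, smul_apply, single_add_single_apply_self hpq, smul_zero, add_zero]
  rw [trace_mul_single_add_single hC, trace_mul_comm,
    trace_mul_single_add_single (hX.1.isHermitian_cfc _)] at h
  linarith

end PosDef

end Matrix

open NormedSpace in
theorem stmt19_general {n : ℕ} (β : ℝ) (hβ : 0 < β)
    (C : Matrix (Fin n) (Fin n) ℝ) (hC : C.IsHermitian)
    (d : Fin n → ℝ)
    (F : (X : Matrix (Fin n) (Fin n) ℝ) → X.IsHermitian → ℝ)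
    (hF : ∀ X hX, F X hX
      = (C * X).trace + β⁻¹ * ((X * Matrix.IsHermitian.cfc hX Real.log).trace - X.trace))
    (X : Matrix (Fin n) (Fin n) ℝ) (hX : X.PosDef) (hXd : ∀ i, X i i = d i)
    (hmin : ∀ Y (hY : Y.PosDef), (∀ i, Y i i = d i) → F X hX.1 ≤ F Y hY.1) :
    ∃ lam : Fin n → ℝ, X = exp ((-β) • (C - Matrix.diagonal lam)) := by
  have hmin' : ∀ Y (hY : Y.PosDef), (∀ i, Y i i = X i i) →
      Matrix.freeEnergy β C X hX.1 ≤ Matrix.freeEnergy β C Y hY.1 := fun Y hY hYd => by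
    have h := hmin Y hY fun i => (hYd i).trans (hXd i)
    rwa [hF, hF] at h
  refine ⟨fun i => C i i + β⁻¹ * hX.1.cfc Real.log i i, ?_⟩
  rw [Matrix.neg_smul_sub_diagonal_eq hβ.ne'
    fun p q hpq => hX.add_inv_mul_cfc_log_apply_eq_zero hβ hC hmin' hpq, hX.exp_cfc_log]

open NormedSpace in
/-- Gibbs variational characterization: for `β > 0` and symmetric `C`, a positive definite
minimizer `X` of `X ↦ Tr(CX) + β⁻¹ (Tr(X log X) − Tr X)` over symmetric positive definite
matrices with prescribed (positive) diagonal `d` has the form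
`X = exp(−β(C − diag λ))` for some `λ ∈ ℝⁿ`. -/
theorem stmt19 {n : ℕ} (β : ℝ) (hβ : 0 < β)
    (C : Matrix (Fin n) (Fin n) ℝ) (hC : C.IsHermitian)
    (d : Fin n → ℝ) (hd : ∀ i, 0 < d i)
    (F : (X : Matrix (Fin n) (Fin n) ℝ) → X.IsHermitian → ℝ)
    (hF : ∀ X hX, F X hX
      = (C * X).trace + β⁻¹ * ((X * Matrix.IsHermitian.cfc hX Real.log).trace - X.trace))
    (X : Matrix (Fin n) (Fin n) ℝ) (hX : X.PosDef) (hXd : ∀ i, X i i = d i)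
    (hmin : ∀ Y (hY : Y.PosDef), (∀ i, Y i i = d i) → F X hX.1 ≤ F Y hY.1) :
    ∃ lam : Fin n → ℝ, X = exp ((-β) • (C - Matrix.diagonal lam)) :=
  stmt19_general β hβ C hC d F hF X hX hXd hmin
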